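/- arXiv:math/0501452 — 2 statements merged into one kernel-verified Lean document; each statement's English description precedes it below -/
import Mathlib

section
/- Let E and D be open ellipsoids in ℝⁿ with n ≥ 2, whose boundaries do not intersect transversally at any point (i.e., at any common boundary point, the gradients of the defining quadratic functions are linearly dependent). If E ∩ D is nonempty, then either E ⊆ D or D ⊆ E. -/
/-!
Write `P`, `Q` for the quadratic functions cutting out `E` and `D`. If neither ellipsoid contains
the other, `∂D` meets `E` (on a segment from `E ∩ D` to `E \ D`) and also the complement of `E`
(a chord of `D` through a point of `D \ E` has an endpoint outside the convex set `E`); since `∂D`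
is connected for `n ≥ 2`, it contains a point `w` of `∂E`. There `∇P(w) = l • ∇Q(w)` with `l > 0`,
so `P - l Q = (x - w)ᵀ M (x - w)` with `M = A₁ - l • A₂`. If `M` is semidefinite, this gives one of
the inclusions. Otherwise pick an isotropic vector `t` of `M` with `M t ≠ 0` and `∇Q(w) ⬝ t ≠ 0`:
the line `w + ℝ t` meets `∂D` at a second point `p`, where `P` vanishes as well; tangency at `p`
forces the same ratio `l`, and comparing the gradients of `P - l Q` at `w` and `p` gives `M t = 0`.
-/

open Matrix Set Topology

section

variable {ι : Type*}

lemma Matrix.PosSemidef.isSymm_of_real {A : Matrix ι ι ℝ} (hA : A.PosSemidef) : A.IsSymm :=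
  isHermitian_iff_isSymm.mp hA.1

variable [Fintype ι]

lemma Matrix.IsSymm.dotProduct_mulVec_comm {A : Matrix ι ι ℝ} (hA : A.IsSymm) (x y : ι → ℝ) :
    x ⬝ᵥ A *ᵥ y = y ⬝ᵥ A *ᵥ x := by
  rw [dotProduct_mulVec, ← mulVec_transpose, hA.eq, dotProduct_comm]

lemma Matrix.PosSemidef.dotProduct_mulVec_self_nonneg {A : Matrix ι ι ℝ} (hA : A.PosSemidef)
    (x : ι → ℝ) : 0 ≤ x ⬝ᵥ A *ᵥ x := by
  simpa using hA.dotProduct_mulVec_nonneg x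

lemma Matrix.PosDef.dotProduct_mulVec_self_pos {A : Matrix ι ι ℝ} (hA : A.PosDef) {x : ι → ℝ}
    (hx : x ≠ 0) : 0 < x ⬝ᵥ A *ᵥ x := by
  simpa using hA.dotProduct_mulVec_pos hx

lemma dotProduct_sub_smul_mulVec_self (A₁ A₂ : Matrix ι ι ℝ) (l : ℝ) (x : ι → ℝ) :
    x ⬝ᵥ (A₁ - l • A₂) *ᵥ x = x ⬝ᵥ A₁ *ᵥ x - l * (x ⬝ᵥ A₂ *ᵥ x) := by
  rw [sub_mulVec, smul_mulVec, dotProduct_sub, dotProduct_smul, smul_eq_mul]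

lemma Matrix.IsSymm.dotProduct_add_smul_mulVec_self {A : Matrix ι ι ℝ} (hA : A.IsSymm)
    (u v : ι → ℝ) (s : ℝ) :
    (u + s • v) ⬝ᵥ A *ᵥ (u + s • v)
      = u ⬝ᵥ A *ᵥ u + 2 * s * (u ⬝ᵥ A *ᵥ v) + s ^ 2 * (v ⬝ᵥ A *ᵥ v) := by
  simp only [mulVec_add, mulVec_smul, dotProduct_add, add_dotProduct, dotProduct_smul,
    smul_dotProduct, smul_eq_mul]
  linear_combination s * hA.dotProduct_mulVec_comm v u

def quadFun (A : Matrix ι ι ℝ) (b : ι → ℝ) (c : ℝ) (x : ι → ℝ) : ℝ :=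
  x ⬝ᵥ A.mulVec x + b ⬝ᵥ x + c

def quadGrad (A : Matrix ι ι ℝ) (b : ι → ℝ) (x : ι → ℝ) : ι → ℝ :=
  (2 : ℝ) • A.mulVec x + b

variable {A A₁ A₂ : Matrix ι ι ℝ} {b b₁ b₂ : ι → ℝ} {c c₁ c₂ : ℝ}

lemma quadFun_eq_taylor (hA : A.IsSymm) (x y : ι → ℝ) :
    quadFun A b c y = quadFun A b c x + quadGrad A b x ⬝ᵥ (y - x) + (y - x) ⬝ᵥ A *ᵥ (y - x) := by
  simp only [quadFun, quadGrad, mulVec_sub, dotProduct_sub, sub_dotProduct, add_dotProduct,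
    smul_dotProduct, smul_eq_mul]
  linear_combination hA.dotProduct_mulVec_comm x y + 2 * dotProduct_comm (A *ᵥ x) x
    - 2 * dotProduct_comm (A *ᵥ x) y

lemma quadFun_add_smul (hA : A.IsSymm) (x d : ι → ℝ) (t : ℝ) :
    quadFun A b c (x + t • d)
      = quadFun A b c x + t * (quadGrad A b x ⬝ᵥ d) + t ^ 2 * (d ⬝ᵥ A *ᵥ d) := by
  rw [quadFun_eq_taylor hA x, add_sub_cancel_left]
  simp only [mulVec_smul, dotProduct_smul, smul_dotProduct, smul_eq_mul]
  ring

lemma quadGrad_sub_quadGrad (x y : ι → ℝ) :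
    quadGrad A b y - quadGrad A b x = (2 : ℝ) • A *ᵥ (y - x) := by
  simp only [quadGrad, mulVec_sub, smul_sub]
  abel

lemma quadFun_sub_smul (l : ℝ) (x : ι → ℝ) :
    quadFun A₁ b₁ c₁ x - l * quadFun A₂ b₂ c₂ x
      = quadFun (A₁ - l • A₂) (b₁ - l • b₂) (c₁ - l * c₂) x := by
  simp only [quadFun, dotProduct_sub_smul_mulVec_self, sub_dotProduct, smul_dotProduct,
    smul_eq_mul]
  ring

lemma quadGrad_sub_smul (l : ℝ) (x : ι → ℝ) :
    quadGrad A₁ b₁ x - l • quadGrad A₂ b₂ x = quadGrad (A₁ - l • A₂) (b₁ - l • b₂) x := by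
  simp only [quadGrad, sub_mulVec, smul_mulVec, smul_add, smul_sub, smul_comm l (2 : ℝ)]
  abel

lemma quadFun_eq_of_critical (hA : A.IsSymm) {w : ι → ℝ} (hw : quadFun A b c w = 0)
    (hgrad : quadGrad A b w = 0) (x : ι → ℝ) : quadFun A b c x = (x - w) ⬝ᵥ A *ᵥ (x - w) := by
  rw [quadFun_eq_taylor hA w, hw, hgrad, zero_dotProduct, zero_add, zero_add]

lemma continuous_quadFun : Continuous (quadFun A b c) := by
  unfold quadFun
  fun_prop

lemma convexOn_quadFun (hA : A.PosSemidef) : ConvexOn ℝ univ (quadFun A b c) := by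
  refine ⟨convex_univ, fun x _ y _ s t hs ht hst => ?_⟩
  obtain rfl : s = 1 - t := by linarith
  have hS := hA.isSymm_of_real
  have hxy : (1 - t) • x + t • y = x + t • (y - x) := by module
  rw [hxy, quadFun_add_smul hS, quadFun_eq_taylor hS x y, smul_eq_mul, smul_eq_mul]
  nlinarith [hA.dotProduct_mulVec_self_nonneg (y - x), mul_nonneg hs ht]

lemma convex_setOf_quadFun_neg (hA : A.PosSemidef) : Convex ℝ {x | quadFun A b c x < 0} := by
  simpa using (convexOn_quadFun hA (b := b) (c := c)).convex_lt 0

lemma quadGrad_dotProduct_sub_neg (hA : A.PosSemidef) {p x : ι → ℝ} (hp : quadFun A b c p = 0)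
    (hx : quadFun A b c x < 0) : quadGrad A b p ⬝ᵥ (x - p) < 0 := by
  have h := quadFun_eq_taylor hA.isSymm_of_real p x (b := b) (c := c)
  linarith [hA.dotProduct_mulVec_self_nonneg (x - p)]

lemma exists_quadGrad_eq_zero (hA : A.PosDef) (b : ι → ℝ) : ∃ o, quadGrad A b o = 0 := by
  classical
  refine ⟨-(2 : ℝ)⁻¹ • A⁻¹ *ᵥ b, ?_⟩
  rw [quadGrad, mulVec_smul, mulVec_mulVec, mul_nonsing_inv _ hA.det_pos.ne'.isUnit, one_mulVec]
  module

lemma quadFun_eq_quadFun_add_of_quadGrad_eq_zero (hA : A.IsSymm) {o : ι → ℝ}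
    (ho : quadGrad A b o = 0) (x : ι → ℝ) :
    quadFun A b c x = quadFun A b c o + (x - o) ⬝ᵥ A *ᵥ (x - o) := by
  rw [quadFun_eq_taylor hA o, ho, zero_dotProduct, add_zero]

lemma isConnected_setOf_quadFun_eq_zero (hA : A.PosDef) (hι : 1 < Fintype.card ι)
    (hneg : ∃ x, quadFun A b c x < 0) : IsConnected {x | quadFun A b c x = 0} := by
  obtain ⟨o, ho⟩ := exists_quadGrad_eq_zero hA b
  have hcenter := quadFun_eq_quadFun_add_of_quadGrad_eq_zero hA.posSemidef.isSymm_of_real ho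
    (c := c)
  set r := -quadFun A b c o
  have hr : 0 < r := by
    obtain ⟨x, hx⟩ := hneg
    linarith [hcenter x, hA.posSemidef.dotProduct_mulVec_self_nonneg (x - o)]
  -- radial projection of the punctured space onto the level set
  have himage : (fun y => o + √(r / (y ⬝ᵥ A *ᵥ y)) • y) '' {0}ᶜ = {x | quadFun A b c x = 0} := by
    ext x
    constructor
    · rintro ⟨y, hy, rfl⟩
      have hq := hA.dotProduct_mulVec_self_pos hy
      change quadFun A b c _ = 0
      rw [hcenter, add_sub_cancel_left, mulVec_smul, dotProduct_smul, smul_dotProduct,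
        smul_eq_mul, smul_eq_mul, ← mul_assoc, Real.mul_self_sqrt (div_pos hr hq).le,
        div_mul_cancel₀ _ hq.ne', add_neg_cancel]
    · intro hx
      have hq : (x - o) ⬝ᵥ A *ᵥ (x - o) = r := by
        linarith [hcenter x, show quadFun A b c x = 0 from hx]
      refine ⟨x - o, fun h => hr.ne' ?_, ?_⟩
      · rw [← hq, show x - o = 0 from h, zero_dotProduct]
      · simp [hq, div_self hr.ne']
  rw [← himage]
  refine (isConnected_compl_singleton_of_one_lt_rank (by simpa [rank_fun'] using hι) 0).image _ ?_
  fun_prop (disch := exact fun y hy => (hA.dotProduct_mulVec_self_pos hy).ne')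

lemma exists_neg_root_and_pos_root {a b c : ℝ} (ha : 0 < a) (hc : c < 0) :
    ∃ s t : ℝ, s < 0 ∧ 0 < t ∧ a * s ^ 2 + b * s + c = 0 ∧ a * t ^ 2 + b * t + c = 0 := by
  have hdisc : 0 ≤ b ^ 2 - 4 * a * c := by nlinarith
  set d := √(b ^ 2 - 4 * a * c)
  have hd : d ^ 2 = b ^ 2 - 4 * a * c := Real.sq_sqrt hdisc
  have hd0 : 0 ≤ d := Real.sqrt_nonneg _
  refine ⟨(-b - d) / (2 * a), (-b + d) / (2 * a), ?_, ?_, ?_, ?_⟩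
  · exact div_neg_of_neg_of_pos (by nlinarith) (by positivity)
  · exact div_pos (by nlinarith) (by positivity)
  · field_simp
    linear_combination hd
  · field_simp
    linear_combination hd

lemma exists_chord_of_quadFun_neg [Nonempty ι] (hA : A.PosDef) {y : ι → ℝ}
    (hy : quadFun A b c y < 0) :
    ∃ u v, quadFun A b c u = 0 ∧ quadFun A b c v = 0 ∧ y ∈ segment ℝ u v := by
  obtain ⟨d, hd⟩ := exists_ne (0 : ι → ℝ)
  have hq := hA.dotProduct_mulVec_self_pos hd
  obtain ⟨s, t, hs, ht, hsroot, htroot⟩ :=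
    exists_neg_root_and_pos_root hq hy (b := quadGrad A b y ⬝ᵥ d)
  have hts : t - s ≠ 0 := by linarith
  have hline := quadFun_add_smul hA.posSemidef.isSymm_of_real y d (b := b) (c := c)
  refine ⟨y + s • d, y + t • d, by linear_combination hline s + hsroot,
    by linear_combination hline t + htroot, t / (t - s), -s / (t - s), ?_, ?_, ?_, ?_⟩
  · exact div_nonneg ht.le (by linarith)
  · exact div_nonneg (by linarith) (by linarith)
  · field_simp
    ring
  · ext i
    simp only [Pi.add_apply, Pi.smul_apply, smul_eq_mul]
    field_simp
    ring

section Isotropic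

variable {M : Matrix ι ι ℝ}

lemma Matrix.IsSymm.mulVec_add_smul_ne_zero (hM : M.IsSymm) {u v : ι → ℝ}
    (hu : 0 < u ⬝ᵥ M *ᵥ u) (hv : v ⬝ᵥ M *ᵥ v ≤ 0) (s : ℝ) : M *ᵥ (u + s • v) ≠ 0 := by
  intro h
  have hu' : u ⬝ᵥ M *ᵥ u = (u + s • v) ⬝ᵥ M *ᵥ (u + s • v)
      + 2 * (-s) * ((u + s • v) ⬝ᵥ M *ᵥ v) + (-s) ^ 2 * (v ⬝ᵥ M *ᵥ v) := by
    rw [← hM.dotProduct_add_smul_mulVec_self]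
    congr <;> module
  rw [hM.dotProduct_mulVec_comm _ v, h, dotProduct_zero, dotProduct_zero] at hu'
  nlinarith

lemma exists_pos_with_dotProduct_ne_zero {u h : ι → ℝ}
    (hu : 0 < u ⬝ᵥ M *ᵥ u) (hh : h ≠ 0) : ∃ u', 0 < u' ⬝ᵥ M *ᵥ u' ∧ h ⬝ᵥ u' ≠ 0 := by
  by_cases hhu : h ⬝ᵥ u = 0
  · have hcont : Continuous fun ε : ℝ => (u + ε • h) ⬝ᵥ M *ᵥ (u + ε • h) := by fun_prop
    have hpos : ∀ᶠ ε in 𝓝[≠] (0 : ℝ), 0 < (u + ε • h) ⬝ᵥ M *ᵥ (u + ε • h) :=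
      ((hcont.tendsto 0).eventually_const_lt (by simpa using hu)).filter_mono nhdsWithin_le_nhds
    obtain ⟨ε, hε, hε0⟩ := (hpos.and self_mem_nhdsWithin).exists
    refine ⟨u + ε • h, hε, ?_⟩
    rw [dotProduct_add, hhu, dotProduct_smul, smul_eq_mul, zero_add]
    exact mul_ne_zero hε0 (fun h0 => hh (dotProduct_self_eq_zero.mp h0))
  · exact ⟨u, hu, hhu⟩

lemma Matrix.IsSymm.exists_isotropic_mulVec_ne_zero_dotProduct_ne_zero (hM : M.IsSymm)
    {u v h : ι → ℝ} (hu : 0 < u ⬝ᵥ M *ᵥ u) (hv : v ⬝ᵥ M *ᵥ v < 0) (hh : h ≠ 0) :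
    ∃ t, t ⬝ᵥ M *ᵥ t = 0 ∧ M *ᵥ t ≠ 0 ∧ h ⬝ᵥ t ≠ 0 := by
  obtain ⟨u, hu, hhu⟩ := exists_pos_with_dotProduct_ne_zero hu hh
  obtain ⟨s, t, hs, ht, hsroot, htroot⟩ :=
    exists_neg_root_and_pos_root (neg_pos.mpr hv) (neg_lt_zero.mpr hu) (b := -(2 * (u ⬝ᵥ M *ᵥ v)))
  have hiso : ∀ r, -(v ⬝ᵥ M *ᵥ v) * r ^ 2 + -(2 * (u ⬝ᵥ M *ᵥ v)) * r + -(u ⬝ᵥ M *ᵥ u) = 0 →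
      (u + r • v) ⬝ᵥ M *ᵥ (u + r • v) = 0 := fun r hr => by
    rw [hM.dotProduct_add_smul_mulVec_self]
    linear_combination -hr
  -- `h` cannot annihilate both `u + s • v` and `u + t • v`, since `s ≠ t` and `h ⬝ᵥ u ≠ 0`
  by_cases hhs : h ⬝ᵥ (u + s • v) = 0
  · refine ⟨u + t • v, hiso t htroot, hM.mulVec_add_smul_ne_zero hu hv.le t, fun hht => hhu ?_⟩
    simp only [dotProduct_add, dotProduct_smul, smul_eq_mul] at hhs hht
    have hhv : h ⬝ᵥ v = 0 := by
      have : (t - s) * (h ⬝ᵥ v) = 0 := by linear_combination hht - hhs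
      exact (mul_eq_zero.mp this).resolve_left (by linarith)
    linear_combination hhs - s * hhv
  · exact ⟨u + s • v, hiso s hsroot, hM.mulVec_add_smul_ne_zero hu hv.le s, hhs⟩

end Isotropic

lemma exists_pos_smul_of_not_linearIndependent (hA₁ : A₁.PosSemidef) (hA₂ : A₂.PosSemidef)
    {p x : ι → ℝ} (hp₁ : quadFun A₁ b₁ c₁ p = 0) (hp₂ : quadFun A₂ b₂ c₂ p = 0)
    (hx₁ : quadFun A₁ b₁ c₁ x < 0) (hx₂ : quadFun A₂ b₂ c₂ x < 0)
    (hdep : ¬ LinearIndependent ℝ ![quadGrad A₁ b₁ p, quadGrad A₂ b₂ p]) :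
    ∃ l : ℝ, 0 < l ∧ quadGrad A₁ b₁ p = l • quadGrad A₂ b₂ p := by
  have h₁ := quadGrad_dotProduct_sub_neg hA₁ hp₁ hx₁
  have h₂ := quadGrad_dotProduct_sub_neg hA₂ hp₂ hx₂
  have hne : quadGrad A₂ b₂ p ≠ 0 := fun h => by simp [h] at h₂
  obtain ⟨l, hl⟩ : ∃ l : ℝ, l • quadGrad A₂ b₂ p = quadGrad A₁ b₁ p := by
    simpa [linearIndependent_fin2, hne] using hdep
  rw [← hl, smul_dotProduct, smul_eq_mul] at h₁
  exact ⟨l, by nlinarith, hl.symm⟩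

lemma quadFun_sub_smul_eq_of_tangent (hA₁ : A₁.IsSymm) (hA₂ : A₂.IsSymm) {w : ι → ℝ} {l : ℝ}
    (hw₁ : quadFun A₁ b₁ c₁ w = 0) (hw₂ : quadFun A₂ b₂ c₂ w = 0)
    (hgrad : quadGrad A₁ b₁ w = l • quadGrad A₂ b₂ w) (x : ι → ℝ) :
    quadFun A₁ b₁ c₁ x - l * quadFun A₂ b₂ c₂ x = (x - w) ⬝ᵥ (A₁ - l • A₂) *ᵥ (x - w) := by
  rw [quadFun_sub_smul]
  refine quadFun_eq_of_critical (hA₁.sub (hA₂.smul l)) ?_ ?_ x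
  · rw [← quadFun_sub_smul, hw₁, hw₂, mul_zero, sub_zero]
  · rw [← quadGrad_sub_smul, hgrad, sub_self]

section Tangent

variable (A₁ A₂ b₁ b₂ c₁ c₂) in
def TangentAtCommonZeros : Prop :=
  ∀ x, quadFun A₁ b₁ c₁ x = 0 → quadFun A₂ b₂ c₂ x = 0 →
    ¬ LinearIndependent ℝ ![quadGrad A₁ b₁ x, quadGrad A₂ b₂ x]

variable {x w : ι → ℝ} {l : ℝ} (hA₁ : A₁.PosSemidef) (hA₂ : A₂.PosDef)
  (hx₁ : quadFun A₁ b₁ c₁ x < 0) (hx₂ : quadFun A₂ b₂ c₂ x < 0)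
  (htan : TangentAtCommonZeros A₁ A₂ b₁ b₂ c₁ c₂)
  (hw₁ : quadFun A₁ b₁ c₁ w = 0) (hw₂ : quadFun A₂ b₂ c₂ w = 0)
  (hgrad : quadGrad A₁ b₁ w = l • quadGrad A₂ b₂ w)
include hA₁ hA₂ hx₁ hx₂ htan hw₁ hw₂ hgrad

lemma mulVec_eq_zero_of_isotropic {t : ι → ℝ} (ht : t ⬝ᵥ (A₁ - l • A₂) *ᵥ t = 0)
    (htw : quadGrad A₂ b₂ w ⬝ᵥ t ≠ 0) : (A₁ - l • A₂) *ᵥ t = 0 := by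
  have hS₁ := hA₁.isSymm_of_real
  have hS₂ := hA₂.posSemidef.isSymm_of_real
  have hρ := hA₂.dotProduct_mulVec_self_pos (x := t) (by rintro rfl; simp at htw)
  obtain ⟨s, hst⟩ : ∃ s, s * (t ⬝ᵥ A₂ *ᵥ t) = -(quadGrad A₂ b₂ w ⬝ᵥ t) :=
    ⟨_, div_mul_cancel₀ _ hρ.ne'⟩
  have hs : s ≠ 0 := by
    rintro rfl
    exact htw (by linarith)
  have hp₂ : quadFun A₂ b₂ c₂ (w + s • t) = 0 := by
    rw [quadFun_add_smul hS₂, hw₂]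
    linear_combination s * hst
  have hR := quadFun_sub_smul_eq_of_tangent hS₁ hS₂ hw₁ hw₂ hgrad
  have hp₁ : quadFun A₁ b₁ c₁ (w + s • t) = 0 := by
    have h := hR (w + s • t)
    rw [add_sub_cancel_left, mulVec_smul, dotProduct_smul, smul_dotProduct, ht, hp₂] at h
    simpa using h
  obtain ⟨l', -, hgrad'⟩ :=
    exists_pos_smul_of_not_linearIndependent hA₁ hA₂.posSemidef hp₁ hp₂ hx₁ hx₂ (htan _ hp₁ hp₂)
  have hl' : l' = l := by
    have h := quadFun_sub_smul_eq_of_tangent hS₁ hS₂ hp₁ hp₂ hgrad' w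
    rw [hw₁, hw₂, show w - (w + s • t) = (-s) • t by module, mulVec_smul, dotProduct_smul,
      smul_dotProduct, dotProduct_sub_smul_mulVec_self] at h
    rw [dotProduct_sub_smul_mulVec_self] at ht
    have h' : s ^ 2 * (t ⬝ᵥ A₂ *ᵥ t) * (l' - l) = 0 := by
      simp only [smul_eq_mul] at h
      linear_combination s ^ 2 * ht + h
    simpa [hs, hρ.ne', sub_eq_zero] using h'
  subst hl'
  have h : quadGrad (A₁ - l' • A₂) (b₁ - l' • b₂) (w + s • t)
      - quadGrad (A₁ - l' • A₂) (b₁ - l' • b₂) w = 0 := by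
    rw [← quadGrad_sub_smul, ← quadGrad_sub_smul, hgrad, hgrad', sub_self, sub_self, sub_self]
  rw [quadGrad_sub_quadGrad, add_sub_cancel_left, mulVec_smul, smul_smul] at h
  exact (smul_eq_zero.mp h).resolve_left (mul_ne_zero two_ne_zero hs)

lemma nonneg_or_nonpos_of_tangent :
    (∀ y, 0 ≤ y ⬝ᵥ (A₁ - l • A₂) *ᵥ y) ∨ ∀ y, y ⬝ᵥ (A₁ - l • A₂) *ᵥ y ≤ 0 := by
  by_contra! ⟨⟨v, hv⟩, ⟨u, hu⟩⟩
  have hgrad₂ : quadGrad A₂ b₂ w ≠ 0 := fun h => by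
    simpa [h] using quadGrad_dotProduct_sub_neg hA₂.posSemidef hw₂ hx₂
  have hM := hA₁.isSymm_of_real.sub (hA₂.posSemidef.isSymm_of_real.smul l)
  obtain ⟨t, ht, hMt, htw⟩ :=
    hM.exists_isotropic_mulVec_ne_zero_dotProduct_ne_zero hu hv hgrad₂
  exact hMt (mulVec_eq_zero_of_isotropic hA₁ hA₂ hx₁ hx₂ htan hw₁ hw₂ hgrad ht htw)

end Tangent

lemma exists_common_zero (hA₁ : A₁.PosSemidef) (hA₂ : A₂.PosDef) (hι : 1 < Fintype.card ι)
    {x y z : ι → ℝ} (hx₁ : quadFun A₁ b₁ c₁ x < 0) (hx₂ : quadFun A₂ b₂ c₂ x < 0)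
    (hy₁ : quadFun A₁ b₁ c₁ y < 0) (hy₂ : 0 ≤ quadFun A₂ b₂ c₂ y)
    (hz₁ : 0 ≤ quadFun A₁ b₁ c₁ z) (hz₂ : quadFun A₂ b₂ c₂ z < 0) :
    ∃ w, quadFun A₁ b₁ c₁ w = 0 ∧ quadFun A₂ b₂ c₂ w = 0 := by
  have hE := convex_setOf_quadFun_neg hA₁ (b := b₁) (c := c₁)
  obtain ⟨p, hp₁, hp₂⟩ := hE.isPreconnected.intermediate_value hx₁ hy₁
    continuous_quadFun.continuousOn ⟨hx₂.le, hy₂⟩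
  have : Nonempty ι := Fintype.card_pos_iff.mp (by omega)
  obtain ⟨q, hq₂, hq₁⟩ : ∃ q, quadFun A₂ b₂ c₂ q = 0 ∧ 0 ≤ quadFun A₁ b₁ c₁ q := by
    by_contra! h
    obtain ⟨u, v, hu, hv, hz⟩ := exists_chord_of_quadFun_neg hA₂ hz₂
    exact hz₁.not_gt (hE.segment_subset (h u hu) (h v hv) hz)
  replace hp₁ : quadFun A₁ b₁ c₁ p < 0 := hp₁
  obtain ⟨w, hw₂, hw₁⟩ := (isConnected_setOf_quadFun_eq_zero hA₂ hι ⟨x, hx₂⟩).isPreconnected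
    |>.intermediate_value hp₂ hq₂ continuous_quadFun.continuousOn ⟨hp₁.le, hq₁⟩
  exact ⟨w, hw₁, hw₂⟩

end

theorem ellipsoids_no_transversal_intersection_general {n : ℕ} (hn : 2 ≤ n)
    (A1 A2 : Matrix (Fin n) (Fin n) ℝ) (b1 b2 : Fin n → ℝ) (c1 c2 : ℝ)
    (hA1 : A1.PosDef) (hA2 : A2.PosDef)
    (E D : Set (Fin n → ℝ))
    (hE : E = {x | x ⬝ᵥ A1.mulVec x + b1 ⬝ᵥ x + c1 < 0})
    (hD : D = {x | x ⬝ᵥ A2.mulVec x + b2 ⬝ᵥ x + c2 < 0})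
    (htrans : ∀ x : Fin n → ℝ, x ⬝ᵥ A1.mulVec x + b1 ⬝ᵥ x + c1 = 0 →
      x ⬝ᵥ A2.mulVec x + b2 ⬝ᵥ x + c2 = 0 →
      ¬ LinearIndependent ℝ ![(2 : ℝ) • A1.mulVec x + b1, (2 : ℝ) • A2.mulVec x + b2])
    (hint : (E ∩ D).Nonempty) :
    E ⊆ D ∨ D ⊆ E := by
  subst hE hD
  obtain ⟨x, hx₁, hx₂⟩ := hint
  by_contra h
  obtain ⟨⟨y, hy₁, hy₂⟩, ⟨z, hz₂, hz₁⟩⟩ := (not_or.mp h).imp Set.not_subset.mp Set.not_subset.mp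
  replace hy₂ : 0 ≤ quadFun A2 b2 c2 y := not_lt.mp hy₂
  replace hz₁ : 0 ≤ quadFun A1 b1 c1 z := not_lt.mp hz₁
  have hA1' := hA1.posSemidef
  obtain ⟨w, hw₁, hw₂⟩ :=
    exists_common_zero hA1' hA2 (by rw [Fintype.card_fin]; omega) hx₁ hx₂ hy₁ hy₂ hz₁ hz₂
  obtain ⟨l, hl, hgrad⟩ := exists_pos_smul_of_not_linearIndependent hA1' hA2.posSemidef hw₁ hw₂
    hx₁ hx₂ (htrans w hw₁ hw₂)
  have hR := quadFun_sub_smul_eq_of_tangent hA1'.isSymm_of_real hA2.posSemidef.isSymm_of_real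
    hw₁ hw₂ hgrad
  rcases nonneg_or_nonpos_of_tangent hA1' hA2 hx₁ hx₂ htrans hw₁ hw₂ hgrad with hM | hM
  · nlinarith [hR y, hM (y - w), show quadFun A1 b1 c1 y < 0 from hy₁]
  · nlinarith [hR z, hM (z - w), show quadFun A2 b2 c2 z < 0 from hz₂]

theorem ellipsoids_no_transversal_intersection {n : ℕ} (hn : 2 ≤ n)
    (A1 A2 : Matrix (Fin n) (Fin n) ℝ) (b1 b2 : Fin n → ℝ) (c1 c2 : ℝ)
    (hA1 : A1.PosDef) (hA2 : A2.PosDef)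
    (E D : Set (Fin n → ℝ))
    (hE : E = {x | x ⬝ᵥ A1.mulVec x + b1 ⬝ᵥ x + c1 < 0})
    (hD : D = {x | x ⬝ᵥ A2.mulVec x + b2 ⬝ᵥ x + c2 < 0})
    (hEne : E.Nonempty) (hDne : D.Nonempty)
    (htrans : ∀ x : Fin n → ℝ, x ⬝ᵥ A1.mulVec x + b1 ⬝ᵥ x + c1 = 0 →
      x ⬝ᵥ A2.mulVec x + b2 ⬝ᵥ x + c2 = 0 →
      ¬ LinearIndependent ℝ ![(2 : ℝ) • A1.mulVec x + b1, (2 : ℝ) • A2.mulVec x + b2])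
    (hint : (E ∩ D).Nonempty) :
    E ⊆ D ∨ D ⊆ E :=
  ellipsoids_no_transversal_intersection_general hn A1 A2 b1 b2 c1 c2 hA1 hA2 E D hE hD htrans hint
end

section
/- Let A, B be real symmetric n×n matrices forming a non-dissipative pair with A, B linearly independent and minrank{A,B} = 2. Then there exist linearly independent vectors ξ, η ∈ ℝⁿ and a nonzero element D ∈ span_ℝ{A,B} with xᵀDx = (ξ·x)(η·x) for all x; in particular every connected subset of the transversal intersection locus N = {x : Q_A(x)=Q_B(x)=0, Ax ∧ Bx ≠ 0} is contained in a hyperplane of ℝⁿ. -/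
/-!
Non-dissipativity makes every nonzero `D` in the pencil indefinite, so a rank-two `D` has exactly
one positive and one negative eigenvalue, `a²` and `-c²`. With `u`, `v` the corresponding unit
eigenvectors, `ξ = a u + c v` and `η = a u - c v` give `D = (ξ ηᵀ + η ξᵀ) / 2`, hence
`Q_D(x) = (ξ·x)(η·x)`. On the locus `Q_D` vanishes, so each point lies in `ξ^⊥ ∪ η^⊥`; it cannot
lie in both, since there `D x = 0`, while `A x` and `B x` are independent. Hence a preconnected
subset of the locus lies in one of these two closed hyperplanes.
-/

theorem IsPreconnected.forall_eq_zero_or_forall_eq_zero {X R : Type*} [TopologicalSpace X]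
    [TopologicalSpace R] [T1Space R] [Zero R] {N : Set X} (hN : IsPreconnected N) {f g : X → R}
    (hf : Continuous f) (hg : Continuous g) (hzero : ∀ x ∈ N, f x = 0 ∨ g x = 0)
    (hne : ∀ x ∈ N, f x ≠ 0 ∨ g x ≠ 0) :
    (∀ x ∈ N, f x = 0) ∨ ∀ x ∈ N, g x = 0 :=
  isPreconnected_iff_subset_of_disjoint_closed.mp hN _ _ (isClosed_singleton.preimage hf)
    (isClosed_singleton.preimage hg) hzero
    (Set.eq_empty_of_forall_notMem fun x ⟨hx, hfx, hgx⟩ => (hne x hx).elim (· hfx) (· hgx))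

theorem LinearIndependent.pair_add_smul_sub_smul {K M : Type*} [Field K] [NeZero (2 : K)]
    [AddCommGroup M] [Module K M] {u v : M} (h : LinearIndependent K ![u, v]) {a c : K}
    (ha : a ≠ 0) (hc : c ≠ 0) :
    LinearIndependent K ![a • u + c • v, a • u - c • v] := by
  rw [LinearIndependent.pair_iff] at h ⊢
  intro s t hst
  obtain ⟨hsum, hdiff⟩ := h ((s + t) * a) ((s - t) * c) (by rw [← hst]; module)
  have hsum' : s + t = 0 := (mul_eq_zero.mp hsum).resolve_right ha
  have hdiff' : s - t = 0 := (mul_eq_zero.mp hdiff).resolve_right hc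
  have hs : (2 : K) * s = 0 := by linear_combination hsum' + hdiff'
  have hs' : s = 0 := (mul_eq_zero.mp hs).resolve_left two_ne_zero
  exact ⟨hs', by linear_combination hsum' - hs'⟩

namespace Matrix

variable {ι : Type*}

theorem IsSymm.of_mem_span_pair {R : Type*} [CommSemiring R] {A B D : Matrix ι ι R}
    (hA : A.IsSymm) (hB : B.IsSymm) (hD : D ∈ Submodule.span R {A, B}) : D.IsSymm := by
  obtain ⟨p, q, rfl⟩ := Submodule.mem_span_pair.mp hD
  exact (hA.smul p).add (hB.smul q)

theorem dotProduct_mulVec_self_eq_zero_of_mem_span_pair [Fintype ι] {R : Type*} [CommSemiring R]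
    {A B D : Matrix ι ι R} (hD : D ∈ Submodule.span R {A, B}) {x : ι → R}
    (hA : x ⬝ᵥ A *ᵥ x = 0) (hB : x ⬝ᵥ B *ᵥ x = 0) : x ⬝ᵥ D *ᵥ x = 0 := by
  obtain ⟨p, q, rfl⟩ := Submodule.mem_span_pair.mp hD
  simp [add_mulVec, smul_mulVec, hA, hB]

theorem mulVec_ne_zero_of_mem_span_pair [Fintype ι] {R : Type*} [CommRing R]
    {A B D : Matrix ι ι R} (hD : D ∈ Submodule.span R {A, B}) (hD0 : D ≠ 0) {x : ι → R}
    (hx : LinearIndependent R ![A *ᵥ x, B *ᵥ x]) : D *ᵥ x ≠ 0 := by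
  obtain ⟨p, q, rfl⟩ := Submodule.mem_span_pair.mp hD
  intro h
  obtain ⟨rfl, rfl⟩ :=
    LinearIndependent.pair_iff.mp hx p q (by simpa [add_mulVec, smul_mulVec] using h)
  simp at hD0

namespace IsHermitian

variable [Fintype ι] [DecidableEq ι] {D : Matrix ι ι ℝ}

theorem mulVec_eq_sum_eigenvectorBasis (hD : D.IsHermitian) (x : ι → ℝ) :
    D *ᵥ x = ∑ k,
      (hD.eigenvalues k * (hD.eigenvectorBasis k ⬝ᵥ x)) • ⇑(hD.eigenvectorBasis k) := by
  have hx := hD.eigenvectorBasis.sum_repr' (WithLp.toLp 2 x)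
  conv_lhs => rw [← WithLp.ofLp_toLp 2 x, ← hx]
  simp [EuclideanSpace.inner_eq_star_dotProduct, mulVec_sum, mulVec_smul,
    hD.mulVec_eigenvectorBasis, smul_smul, mul_comm, dotProduct_comm]

theorem dotProduct_mulVec_self_eq_sum (hD : D.IsHermitian) (x : ι → ℝ) :
    x ⬝ᵥ D *ᵥ x = ∑ k, hD.eigenvalues k * (hD.eigenvectorBasis k ⬝ᵥ x) ^ 2 := by
  rw [hD.mulVec_eq_sum_eigenvectorBasis, dotProduct_sum]
  refine Finset.sum_congr rfl fun k _ => ?_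
  rw [dotProduct_smul, smul_eq_mul, dotProduct_comm x]
  ring

theorem exists_eigenvalues_neg (hD : D.IsHermitian) (h : ¬D.PosSemidef) :
    ∃ j, hD.eigenvalues j < 0 := by
  simpa [hD.posSemidef_iff_eigenvalues_nonneg, Pi.le_def] using h

theorem exists_eigenvalues_pos (hD : D.IsHermitian) (h : ¬(-D).PosSemidef) :
    ∃ i, 0 < hD.eigenvalues i := by
  by_contra! hle
  refine h (.of_dotProduct_mulVec_nonneg hD.neg fun x => ?_)
  rw [star_trivial, neg_mulVec, dotProduct_neg, hD.dotProduct_mulVec_self_eq_sum,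
    ← Finset.sum_neg_distrib]
  exact Finset.sum_nonneg fun k _ =>
    neg_nonneg.mpr (mul_nonpos_of_nonpos_of_nonneg (hle k) (sq_nonneg _))

theorem eigenvalues_eq_zero_of_rank_eq_card (hD : D.IsHermitian) {s : Finset ι}
    (hrank : D.rank = s.card) (hs : ∀ i ∈ s, hD.eigenvalues i ≠ 0) {k : ι} (hk : k ∉ s) :
    hD.eigenvalues k = 0 := by
  have hsub : s ⊆ ({i | hD.eigenvalues i ≠ 0} : Finset ι) := fun i hi => by simpa using hs i hi
  have hcard : ({i | hD.eigenvalues i ≠ 0} : Finset ι).card ≤ s.card := by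
    rw [← hrank, hD.rank_eq_card_non_zero_eigs, Fintype.card_subtype]
  have := Finset.eq_of_subset_of_card_le hsub hcard
  by_contra hk0
  exact hk (this ▸ by simpa using hk0)

theorem mulVec_eq_of_rank_eq_two (hD : D.IsHermitian) (hrank : D.rank = 2) {i j : ι}
    (hij : i ≠ j) (hi : hD.eigenvalues i ≠ 0) (hj : hD.eigenvalues j ≠ 0) (x : ι → ℝ) :
    D *ᵥ x =
      (hD.eigenvalues i * (hD.eigenvectorBasis i ⬝ᵥ x)) • ⇑(hD.eigenvectorBasis i) +
      (hD.eigenvalues j * (hD.eigenvectorBasis j ⬝ᵥ x)) • ⇑(hD.eigenvectorBasis j) := by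
  have hzero : ∀ k ∉ ({i, j} : Finset ι), hD.eigenvalues k = 0 :=
    fun k => hD.eigenvalues_eq_zero_of_rank_eq_card (by rw [hrank, Finset.card_pair hij])
      (by simp [hi, hj])
  rw [hD.mulVec_eq_sum_eigenvectorBasis, Finset.sum_eq_add_of_mem i j (by simp) (by simp) hij]
  rintro k - ⟨hki, hkj⟩
  simp [hzero k (by simp [hki, hkj])]

theorem linearIndependent_eigenvectorBasis_pair (hD : D.IsHermitian) {i j : ι} (hij : i ≠ j) :
    LinearIndependent ℝ ![(hD.eigenvectorBasis i : ι → ℝ), hD.eigenvectorBasis j] := by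
  have hpair : ![(hD.eigenvectorBasis i : ι → ℝ), hD.eigenvectorBasis j] =
      WithLp.linearEquiv 2 ℝ (ι → ℝ) ∘ hD.eigenvectorBasis ∘ ![i, j] := by
    ext k; fin_cases k <;> rfl
  rw [hpair]
  exact (hD.eigenvectorBasis.orthonormal.linearIndependent.comp _
    (injective_pair_iff_ne.mpr hij)).map' _ (LinearEquiv.ker _)

theorem exists_mulVec_eq_of_rank_eq_two (hD : D.IsHermitian) (hrank : D.rank = 2)
    (hpsd : ¬D.PosSemidef) (hnsd : ¬(-D).PosSemidef) :
    ∃ ξ η : ι → ℝ, LinearIndependent ℝ ![ξ, η] ∧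
      ∀ x, D *ᵥ x = (2⁻¹ : ℝ) • ((η ⬝ᵥ x) • ξ + (ξ ⬝ᵥ x) • η) := by
  obtain ⟨i, hi⟩ := hD.exists_eigenvalues_pos hnsd
  obtain ⟨j, hj⟩ := hD.exists_eigenvalues_neg hpsd
  have hij : i ≠ j := by rintro rfl; linarith
  set u : ι → ℝ := WithLp.ofLp (hD.eigenvectorBasis i)
  set v : ι → ℝ := WithLp.ofLp (hD.eigenvectorBasis j)
  set a := √(hD.eigenvalues i)
  set c := √(-hD.eigenvalues j)
  refine ⟨a • u + c • v, a • u - c • v,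
    (hD.linearIndependent_eigenvectorBasis_pair hij).pair_add_smul_sub_smul
      (Real.sqrt_pos.mpr hi).ne' (Real.sqrt_pos.mpr (neg_pos.mpr hj)).ne', fun x => ?_⟩
  have ha : hD.eigenvalues i = a ^ 2 := (Real.sq_sqrt hi.le).symm
  have hc : hD.eigenvalues j = -c ^ 2 := by rw [Real.sq_sqrt (neg_nonneg.mpr hj.le), neg_neg]
  rw [hD.mulVec_eq_of_rank_eq_two hrank hij hi.ne' hj.ne, ha, hc]
  simp only [add_dotProduct, sub_dotProduct, smul_dotProduct, smul_eq_mul]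
  module

end IsHermitian

end Matrix

open Matrix

theorem minrank_two_locus_in_hyperplane_general {n : ℕ}
    (A B : Matrix (Fin n) (Fin n) ℝ) (hA : A.IsSymm) (hB : B.IsSymm)
    (hnd : ∀ F ∈ Submodule.span ℝ ({A, B} : Set (Matrix (Fin n) (Fin n) ℝ)),
      F.PosSemidef → F = 0)
    (hmin_ex : ∃ F ∈ Submodule.span ℝ ({A, B} : Set (Matrix (Fin n) (Fin n) ℝ)),
      F ≠ 0 ∧ F.rank = 2) :
    ∃ (ξ η : Fin n → ℝ) (D : Matrix (Fin n) (Fin n) ℝ),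
      LinearIndependent ℝ ![ξ, η] ∧
      D ∈ Submodule.span ℝ ({A, B} : Set (Matrix (Fin n) (Fin n) ℝ)) ∧ D ≠ 0 ∧
      (∀ x : Fin n → ℝ, x ⬝ᵥ D.mulVec x = (ξ ⬝ᵥ x) * (η ⬝ᵥ x)) ∧
      ∀ N : Set (Fin n → ℝ), IsPreconnected N →
        (∀ x ∈ N, x ⬝ᵥ A.mulVec x = 0 ∧ x ⬝ᵥ B.mulVec x = 0 ∧
          LinearIndependent ℝ ![A.mulVec x, B.mulVec x]) →
        ∃ ν : Fin n → ℝ, ν ≠ 0 ∧ ∀ x ∈ N, ν ⬝ᵥ x = 0 := by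
  obtain ⟨D, hDmem, hD0, hrank⟩ := hmin_ex
  have hD : D.IsHermitian := isHermitian_iff_isSymm.mpr (hA.of_mem_span_pair hB hDmem)
  obtain ⟨ξ, η, hξη, hDx⟩ := hD.exists_mulVec_eq_of_rank_eq_two hrank
    (fun h => hD0 (hnd D hDmem h)) (fun h => hD0 (neg_eq_zero.mp (hnd _ (neg_mem hDmem) h)))
  have hQ : ∀ x, x ⬝ᵥ D *ᵥ x = (ξ ⬝ᵥ x) * (η ⬝ᵥ x) := fun x => by
    rw [hDx, dotProduct_comm]
    simp only [smul_dotProduct, add_dotProduct, smul_eq_mul]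
    ring
  refine ⟨ξ, η, D, hξη, hDmem, hD0, hQ, fun N hN hNloc => ?_⟩
  have hzero : ∀ x ∈ N, ξ ⬝ᵥ x = 0 ∨ η ⬝ᵥ x = 0 := fun x hx => by
    rw [← mul_eq_zero, ← hQ]
    exact dotProduct_mulVec_self_eq_zero_of_mem_span_pair hDmem (hNloc x hx).1 (hNloc x hx).2.1
  have hne : ∀ x ∈ N, ξ ⬝ᵥ x ≠ 0 ∨ η ⬝ᵥ x ≠ 0 := fun x hx => by
    by_contra! h
    exact mulVec_ne_zero_of_mem_span_pair hDmem hD0 (hNloc x hx).2.2 (by simp [hDx, h.1, h.2])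
  rcases hN.forall_eq_zero_or_forall_eq_zero (by fun_prop) (by fun_prop) hzero hne with h | h
  · exact ⟨ξ, hξη.ne_zero 0, h⟩
  · exact ⟨η, hξη.ne_zero 1, h⟩

theorem minrank_two_locus_in_hyperplane {n : ℕ}
    (A B : Matrix (Fin n) (Fin n) ℝ) (hA : A.IsSymm) (hB : B.IsSymm)
    (hli : LinearIndependent ℝ ![A, B])
    (hnd : ∀ F ∈ Submodule.span ℝ ({A, B} : Set (Matrix (Fin n) (Fin n) ℝ)),
      F.PosSemidef → F = 0)
    (hmin_ex : ∃ F ∈ Submodule.span ℝ ({A, B} : Set (Matrix (Fin n) (Fin n) ℝ)),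
      F ≠ 0 ∧ F.rank = 2)
    (hmin_le : ∀ F ∈ Submodule.span ℝ ({A, B} : Set (Matrix (Fin n) (Fin n) ℝ)),
      F ≠ 0 → 2 ≤ F.rank) :
    ∃ (ξ η : Fin n → ℝ) (D : Matrix (Fin n) (Fin n) ℝ),
      LinearIndependent ℝ ![ξ, η] ∧
      D ∈ Submodule.span ℝ ({A, B} : Set (Matrix (Fin n) (Fin n) ℝ)) ∧ D ≠ 0 ∧
      (∀ x : Fin n → ℝ, x ⬝ᵥ D.mulVec x = (ξ ⬝ᵥ x) * (η ⬝ᵥ x)) ∧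
      ∀ N : Set (Fin n → ℝ), IsPreconnected N →
        (∀ x ∈ N, x ⬝ᵥ A.mulVec x = 0 ∧ x ⬝ᵥ B.mulVec x = 0 ∧
          LinearIndependent ℝ ![A.mulVec x, B.mulVec x]) →
        ∃ ν : Fin n → ℝ, ν ≠ 0 ∧ ∀ x ∈ N, ν ⬝ᵥ x = 0 :=
  minrank_two_locus_in_hyperplane_general A B hA hB hnd hmin_ex
end
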